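/- arXiv:2010.01573 — 3 statements merged into one kernel-verified Lean document; each statement's English description precedes it below -/
import Mathlib

section
/- Let M₁,…,M_d be topological monoids such that for each k, every WOT-continuous contraction-valued semigroup homomorphism M_k → B(H) is SOT-continuous. Then every WOT-continuous contraction-valued semigroup homomorphism T : ∏ₖ M_k → B(H) is SOT-continuous. -/
/-! Writing `t = ∏ₖ Pi.mulSingle k (t k)` turns `T t` into a finite product of the coordinate
semigroups `s ↦ T (Pi.mulSingle k s)`, each of which is WOT-, hence by hypothesis SOT-continuous.
On a uniformly bounded set of operators composition is jointly continuous in the strong operator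
topology, so the product is SOT-continuous as well. -/

open Filter Topology

theorem continuous_apply_apply_of_norm_le {𝕜 : Type*} [NontriviallyNormedField 𝕜]
    {E F : Type*} [SeminormedAddCommGroup E] [SeminormedAddCommGroup F] [NormedSpace 𝕜 E]
    [NormedSpace 𝕜 F] {α : Type*} [TopologicalSpace α] {A : α → E →L[𝕜] F} {C : ℝ} (hA : ∀ t, ‖A t‖ ≤ C)
    (hAc : ∀ ξ, Continuous fun t => A t ξ) {g : α → E} (hg : Continuous g) :
    Continuous fun t => A t (g t) := by
  refine continuous_iff_continuousAt.2 fun t₀ => ?_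
  have hsmall : Tendsto (fun t => A t (g t - g t₀)) (𝓝 t₀) (𝓝 0) := by
    refine squeeze_zero_norm (fun t => ((A t).le_opNorm _).trans
      (mul_le_mul_of_nonneg_right (hA t) (norm_nonneg _))) ?_
    simpa using tendsto_const_nhds.mul ((hg.sub (continuous_const (y := g t₀))).norm.tendsto t₀)
  simpa [ContinuousAt] using hsmall.add ((hAc (g t₀)).tendsto t₀)

theorem Finset.piecewise_insert_one {ι : Type*} [DecidableEq ι] {M : ι → Type*}
    [∀ i, Monoid (M i)] (S : Finset ι) {a : ι} (ha : a ∉ S) (t : ∀ i, M i) :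
    (insert a S).piecewise t 1 = Pi.mulSingle a (t a) * S.piecewise t 1 := by
  funext i
  by_cases hi : i = a
  · subst hi
    simp [ha]
  · simp [Finset.piecewise, hi]

theorem continuous_apply_of_continuous_apply_mulSingle {𝕜 : Type*} [NontriviallyNormedField 𝕜]
    {E : Type*} [SeminormedAddCommGroup E] [NormedSpace 𝕜 E] {ι : Type*} [Fintype ι]
    [DecidableEq ι] {M : ι → Type*} [∀ i, Monoid (M i)] [∀ i, TopologicalSpace (M i)]
    (T : (∀ i, M i) →* (E →L[𝕜] E)) {C : ℝ} (hT : ∀ t, ‖T t‖ ≤ C)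
    (hsingle : ∀ i ξ, Continuous fun s : M i => T (Pi.mulSingle i s) ξ) (ξ : E) :
    Continuous fun t => T t ξ := by
  suffices h : ∀ S : Finset ι, ∀ ξ, Continuous fun t => T (S.piecewise t 1) ξ by
    simpa using h Finset.univ ξ
  intro S
  induction S using Finset.induction_on with
  | empty => simpa using fun _ => continuous_const
  | insert a S ha ih =>
    simp only [Finset.piecewise_insert_one S ha, map_mul]
    exact fun ξ => continuous_apply_apply_of_norm_le (fun _ => hT _)
      (fun η => (hsingle a η).comp (continuous_apply a)) (ih ξ)

theorem stmt9_general {H : Type*} [NormedAddCommGroup H] [InnerProductSpace ℂ H]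
    {d : ℕ} (M : Fin d → Type*) [∀ k, Monoid (M k)] [∀ k, TopologicalSpace (M k)]
    (hgood : ∀ k, ∀ T : M k → H →L[ℂ] H,
      T 1 = 1 → (∀ s t, T (s * t) = T s * T t) → (∀ t, ‖T t‖ ≤ 1) →
      (∀ ξ η : H, Continuous fun t => (inner ℂ (T t ξ) η : ℂ)) →
      ∀ ξ : H, Continuous fun t => T t ξ) :
    ∀ T : (∀ k, M k) → H →L[ℂ] H,
      T 1 = 1 → (∀ s t, T (s * t) = T s * T t) → (∀ t, ‖T t‖ ≤ 1) →
      (∀ ξ η : H, Continuous fun t => (inner ℂ (T t ξ) η : ℂ)) →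
      ∀ ξ : H, Continuous fun t => T t ξ := by
  intro T hT1 hTmul hTnorm hTwot
  let T' : (∀ k, M k) →* (H →L[ℂ] H) := ⟨⟨T, hT1⟩, hTmul⟩
  refine continuous_apply_of_continuous_apply_mulSingle T' hTnorm fun k => ?_
  refine hgood k (fun s => T (Pi.mulSingle k s)) (by simpa using hT1)
    (fun s t => by rw [← hTmul, Pi.mulSingle_mul]) (fun _ => hTnorm _)
    fun ξ η => (hTwot ξ η).comp (continuous_mulSingle k)

theorem stmt9 {H : Type*} [NormedAddCommGroup H] [InnerProductSpace ℂ H] [CompleteSpace H]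
    [TopologicalSpace.SeparableSpace H]
    {d : ℕ} (M : Fin d → Type*) [∀ k, Monoid (M k)] [∀ k, TopologicalSpace (M k)]
    (hgood : ∀ k, ∀ T : M k → H →L[ℂ] H,
      T 1 = 1 → (∀ s t, T (s * t) = T s * T t) → (∀ t, ‖T t‖ ≤ 1) →
      (∀ ξ η : H, Continuous fun t => (inner ℂ (T t ξ) η : ℂ)) →
      ∀ ξ : H, Continuous fun t => T t ξ) :
    ∀ T : (∀ k, M k) → H →L[ℂ] H,
      T 1 = 1 → (∀ s t, T (s * t) = T s * T t) → (∀ t, ‖T t‖ ≤ 1) →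
      (∀ ξ η : H, Continuous fun t => (inner ℂ (T t ξ) η : ℂ)) →
      ∀ ξ : H, Continuous fun t => T t ξ :=
  stmt9_general M hgood
end

section
/- Let H be a separable infinite-dimensional Hilbert space and A a set of WOT-continuous contraction-valued functions on a topological monoid M which is closed under finite joins. Then the closure of A in the topology of uniform WOT-convergence on compact subsets of M is convex. -/
open UniformConvergence

/-- The topology of uniform WOT-convergence on compact subsets of `M`. -/
noncomputable def kWot (M H : Type*) [TopologicalSpace M] [NormedAddCommGroup H]
    [InnerProductSpace ℂ H] : TopologicalSpace (M → H →L[ℂ] H) :=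
  TopologicalSpace.induced
    (fun (T : M → H →L[ℂ] H) (p : {K : Set M // IsCompact K} × H × H) =>
      UniformFun.ofFun (fun t : (p.1 : Set M) => (inner ℂ (T t.1 p.2.1) p.2.2 : ℂ)))
    inferInstance

/-- The space of WOT-continuous contraction-valued functions on `M`. -/
def Fcw (M H : Type*) [TopologicalSpace M] [NormedAddCommGroup H] [InnerProductSpace ℂ H] :=
  {T : M → H →L[ℂ] H //
    (∀ t, ‖T t‖ ≤ 1) ∧ ∀ ξ η : H, Continuous fun t => (inner ℂ (T t ξ) η : ℂ)}

/-- `A` is closed under finite joins. -/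
def ClosedUnderFiniteJoins {M H : Type*} [TopologicalSpace M] [NormedAddCommGroup H]
    [InnerProductSpace ℂ H] [CompleteSpace H] (A : Set (Fcw M H)) : Prop :=
  ∀ (n : ℕ) (u : Fin n → H →L[ℂ] H),
    (∀ i j, ContinuousLinearMap.adjoint (u j) * u i = if i = j then 1 else 0) →
    (∑ i, u i * ContinuousLinearMap.adjoint (u i)) = 1 →
    ∀ T : Fin n → Fcw M H, (∀ i, T i ∈ A) →
    ∀ J : Fcw M H,
      (∀ t, J.1 t = ∑ i, u i * (T i).1 t * ContinuousLinearMap.adjoint (u i)) → J ∈ A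

/-!
A basic neighbourhood of `α • S + β • T` only involves finitely many vectors `ξ, η`; let `E` be
their (finite-dimensional) span and approximate `S, T` by `S', T' ∈ A`. Since `H` is separable and
infinite-dimensional, a Hilbert basis extending an orthonormal basis of `E` can be split into two
copies of itself so that the first copy is fixed on `E`; this yields isometries `v₀, v₁` with
`v₀ v₀* + v₁ v₁* = 1` and `v₀ = 1` on `E`. Mixing them by the unitary `!![√α, √β; √β, -√α]` gives
an isometric partition `(u₀, u₁)` with `u₀* = √α` and `u₁* = √β` on `E`, so the join
`u₀ S' u₀* + u₁ T' u₁* ∈ A` has the matrix coefficients `α ⟪S' ξ, η⟫ + β ⟪T' ξ, η⟫` on `E` and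
lies in the neighbourhood.
-/

open ContinuousLinearMap Function

section HilbertBasis

variable {ι 𝕜 E F : Type*} [RCLike 𝕜] [NormedAddCommGroup E] [InnerProductSpace 𝕜 E]
  [NormedAddCommGroup F] [InnerProductSpace 𝕜 F]

theorem Orthonormal.countable [TopologicalSpace.SeparableSpace E] {v : ι → E}
    (hv : Orthonormal 𝕜 v) : Countable ι := by
  refine Pairwise.countable_of_isOpen_disjoint (s := fun i => Metric.ball (v i) (1 / 2))
    (fun i j hij => Metric.ball_disjoint_ball ?_) (fun _ => Metric.isOpen_ball)
    (fun _ => Metric.nonempty_ball.mpr (by norm_num))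
  have hsq : ‖v i - v j‖ ^ 2 = 2 := by
    rw [@norm_sub_sq 𝕜, hv.1 i, hv.1 j, hv.2 hij]
    norm_num
  rw [dist_eq_norm]
  nlinarith [norm_nonneg (v i - v j)]

namespace HilbertBasis

theorem finiteDimensional [Finite ι] (b : HilbertBasis ι 𝕜 E) : FiniteDimensional 𝕜 E := by
  have := Fintype.ofFinite ι
  exact b.toOrthonormalBasis.toBasis.finiteDimensional_of_finite

theorem ext_of_inner_eq (b : HilbertBasis ι 𝕜 E) {x y : E}
    (h : ∀ i, inner 𝕜 (b i) x = inner 𝕜 (b i) y) : x = y :=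
  b.repr.injective <| lp.ext <| funext fun i => by
    simpa only [← b.repr_apply_apply] using h i

theorem continuousLinearMap_ext (b : HilbertBasis ι 𝕜 E) {f g : E →L[𝕜] F}
    (h : ∀ i, f (b i) = g (b i)) : f = g :=
  ContinuousLinearMap.ext_on (Submodule.dense_iff_topologicalClosure_eq_top.mpr b.dense_span)
    (Set.forall_mem_range.2 h)

variable [CompleteSpace F]

noncomputable def isometryOfOrthonormal (b : HilbertBasis ι 𝕜 E) {v : ι → F}
    (hv : Orthonormal 𝕜 v) : E →L[𝕜] F :=
  (hv.orthogonalFamily.linearIsometry.comp b.repr.toLinearIsometry).toContinuousLinearMap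

theorem isometryOfOrthonormal_apply (b : HilbertBasis ι 𝕜 E) {v : ι → F}
    (hv : Orthonormal 𝕜 v) (i : ι) : b.isometryOfOrthonormal hv (b i) = v i := by
  classical
  simp [isometryOfOrthonormal, b.repr_self]

noncomputable def partitionOfEquiv {κ : Type*} (b : HilbertBasis ι 𝕜 F) (e : κ × ι ≃ ι)
    (k : κ) : F →L[𝕜] F :=
  b.isometryOfOrthonormal (v := fun i => b (e (k, i)))
    (b.orthonormal.comp _ (e.injective.comp (Prod.mk_right_injective k)))

theorem partitionOfEquiv_apply {κ : Type*} (b : HilbertBasis ι 𝕜 F) (e : κ × ι ≃ ι) (k : κ)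
    (i : ι) : b.partitionOfEquiv e k (b i) = b (e (k, i)) :=
  b.isometryOfOrthonormal_apply _ i

theorem adjoint_partitionOfEquiv_apply {κ : Type*} [DecidableEq κ] (b : HilbertBasis ι 𝕜 F)
    (e : κ × ι ≃ ι) (k l : κ) (i : ι) :
    adjoint (b.partitionOfEquiv e k) (b (e (l, i))) = if l = k then b i else 0 := by
  classical
  refine b.ext_of_inner_eq fun m => ?_
  rw [adjoint_inner_right, partitionOfEquiv_apply, orthonormal_iff_ite.mp b.orthonormal,
    e.injective.eq_iff, Prod.ext_iff]
  split_ifs <;> simp_all [orthonormal_iff_ite.mp b.orthonormal, b.orthonormal.1]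

end HilbertBasis

theorem exists_hilbertBasis_finite_subset_span [CompleteSpace E] {s : Set E} (hs : s.Finite) :
    ∃ (w : Set E) (b : HilbertBasis w 𝕜 E) (D : Set w),
      D.Finite ∧ s ⊆ Submodule.span 𝕜 (b '' D) := by
  have : FiniteDimensional 𝕜 (Submodule.span 𝕜 s) := FiniteDimensional.span_of_finite 𝕜 hs
  let onb := stdOrthonormalBasis 𝕜 (Submodule.span 𝕜 s)
  let o : Fin _ → E := fun j => (onb j : E)
  have ho : Orthonormal 𝕜 o := onb.orthonormal.comp_linearIsometry (Submodule.span 𝕜 s).subtypeₗᵢ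
  obtain ⟨w, b, hw, hb⟩ := ho.toSubtypeRange.exists_hilbertBasis_extension
  refine ⟨w, b, (↑) ⁻¹' Set.range o,
    (Set.finite_range o).preimage Subtype.val_injective.injOn, fun x hx => ?_⟩
  rw [hb, Subtype.image_preimage_coe, Set.inter_eq_right.mpr hw]
  have hsum : ((∑ j, inner 𝕜 (onb j) ⟨x, Submodule.subset_span hx⟩ • onb j :
      Submodule.span 𝕜 s) : E) = x := congrArg Subtype.val (onb.sum_repr' _)
  rw [SetLike.mem_coe, ← hsum, Submodule.coe_sum]
  exact Submodule.sum_mem _ fun j _ => Submodule.smul_mem _ _ (Submodule.subset_span ⟨j, rfl⟩)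

end HilbertBasis

theorem exists_finTwo_prod_equiv_apply_zero_eq {ι : Type*} [Countable ι] {D : Set ι}
    (hD : Dᶜ.Infinite) : ∃ e : Fin 2 × ι ≃ ι, ∀ i ∈ D, e (0, i) = i := by
  classical
  have : Infinite ↥Dᶜ := hD.to_subtype
  let := (nonempty_denumerable ↥Dᶜ).some
  let := (nonempty_denumerable (↥Dᶜ ⊕ ι)).some
  let absorb : ↥Dᶜ ⊕ ι ≃ ↥Dᶜ := (Denumerable.eqv _).trans (Denumerable.eqv _).symm
  let e : ι ⊕ ι ≃ ι := ((Equiv.Set.sumCompl D).symm.sumCongr (Equiv.refl ι)).trans <|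
    (Equiv.sumAssoc _ _ _).trans <| ((Equiv.refl D).sumCongr absorb).trans (Equiv.Set.sumCompl D)
  refine ⟨((finTwoEquiv.prodCongr (Equiv.refl ι)).trans (Equiv.boolProdEquivSum ι)).trans e,
    fun i hi => ?_⟩
  simp [e, finTwoEquiv, Equiv.boolProdEquivSum, Equiv.Set.sumCompl_symm_apply_of_mem hi]

section IsometricPartition

variable {𝕜 E : Type*} [RCLike 𝕜] [NormedAddCommGroup E] [InnerProductSpace 𝕜 E] [CompleteSpace E]
  {κ : Type*} [Fintype κ]

theorem inner_sum_mul_mul_adjoint_apply (u T : κ → E →L[𝕜] E) (x y : E) :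
    inner 𝕜 ((∑ i, u i * T i * adjoint (u i)) x) y =
      ∑ i, inner 𝕜 (T i (adjoint (u i) x)) (adjoint (u i) y) := by
  simp only [sum_apply, sum_inner, mul_apply_eq_comp, adjoint_inner_right]

theorem adjoint_sum_smul (u : κ → E →L[𝕜] E) (c : κ → 𝕜) :
    adjoint (∑ j, c j • u j) = ∑ j, star (c j) • adjoint (u j) := by
  simp only [map_sum, map_smulₛₗ, RCLike.star_def]

variable [DecidableEq κ]

structure IsIsometricPartition (u : κ → E →L[𝕜] E) : Prop where
  adjoint_mul : ∀ i j, adjoint (u j) * u i = if i = j then 1 else 0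
  sum_mul_adjoint : ∑ i, u i * adjoint (u i) = 1

namespace IsIsometricPartition

variable {u : κ → E →L[𝕜] E}

theorem adjoint_apply_apply (hu : IsIsometricPartition u) (i j : κ) (x : E) :
    adjoint (u j) (u i x) = if i = j then x else 0 := by
  rw [← mul_apply_eq_comp, hu.adjoint_mul]
  split_ifs <;> rfl

theorem adjoint_apply_of_apply_eq (hu : IsIsometricPartition u) {k : κ} {x : E} (hx : u k x = x)
    (i : κ) : adjoint (u i) x = if k = i then x else 0 := by
  conv_lhs => rw [← hx]
  exact hu.adjoint_apply_apply k i x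

theorem sum_apply_adjoint_apply (hu : IsIsometricPartition u) (x : E) :
    ∑ i, u i (adjoint (u i) x) = x := by
  simpa using congrArg (· x) hu.sum_mul_adjoint

theorem norm_sum_apply_sq (hu : IsIsometricPartition u) (y : κ → E) :
    ‖∑ i, u i (y i)‖ ^ 2 = ∑ i, ‖y i‖ ^ 2 := by
  have h : (‖∑ i, u i (y i)‖ : 𝕜) ^ 2 = ∑ i, (‖y i‖ : 𝕜) ^ 2 := by
    simp only [← inner_self_eq_norm_sq_to_K, sum_inner, inner_sum, ← adjoint_inner_right,
      hu.adjoint_apply_apply, apply_ite (inner 𝕜 _), inner_zero_right, Finset.sum_ite_eq,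
      Finset.mem_univ, if_true]
  exact_mod_cast h

theorem sum_norm_adjoint_apply_sq (hu : IsIsometricPartition u) (x : E) :
    ∑ i, ‖adjoint (u i) x‖ ^ 2 = ‖x‖ ^ 2 := by
  have h : ∑ i, (‖adjoint (u i) x‖ : 𝕜) ^ 2 = (‖x‖ : 𝕜) ^ 2 := by
    simp only [← inner_self_eq_norm_sq_to_K, adjoint_inner_left, ← inner_sum,
      hu.sum_apply_adjoint_apply]
  exact_mod_cast h

theorem norm_sum_mul_mul_adjoint_le (hu : IsIsometricPartition u) {T : κ → E →L[𝕜] E} {C : ℝ}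
    (hC : 0 ≤ C) (hT : ∀ i, ‖T i‖ ≤ C) : ‖∑ i, u i * T i * adjoint (u i)‖ ≤ C := by
  refine opNorm_le_bound _ hC fun x => ?_
  rw [← pow_le_pow_iff_left₀ (norm_nonneg _) (by positivity) two_ne_zero]
  calc ‖(∑ i, u i * T i * adjoint (u i)) x‖ ^ 2 = ∑ i, ‖T i (adjoint (u i) x)‖ ^ 2 := by
        simp only [sum_apply, mul_apply_eq_comp, hu.norm_sum_apply_sq]
    _ ≤ ∑ i, (C * ‖adjoint (u i) x‖) ^ 2 := by
        gcongr with i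
        exact (T i).le_of_opNorm_le (hT i) _
    _ = (C * ‖x‖) ^ 2 := by
        rw [mul_pow, ← hu.sum_norm_adjoint_apply_sq x, Finset.mul_sum]
        simp only [mul_pow]

theorem adjoint_sum_smul_apply_of_apply_eq (hu : IsIsometricPartition u) (W : Matrix κ κ 𝕜)
    {k : κ} {x : E} (hx : u k x = x) (i : κ) :
    adjoint (∑ j, W i j • u j) x = star (W i k) • x := by
  simp only [adjoint_sum_smul, sum_apply, smul_apply, hu.adjoint_apply_of_apply_eq hx, smul_ite,
    smul_zero, Finset.sum_ite_eq, Finset.mem_univ, if_true]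

theorem sum_smul_of_mem_unitaryGroup (hu : IsIsometricPartition u) {W : Matrix κ κ 𝕜}
    (hW : W ∈ Matrix.unitaryGroup κ 𝕜) : IsIsometricPartition fun i => ∑ j, W i j • u j where
  adjoint_mul i j := by
    have hWW := congrFun (congrFun (Matrix.mem_unitaryGroup_iff.mp hW) i) j
    simp only [Matrix.mul_apply, Matrix.star_apply, Matrix.one_apply] at hWW
    simp only [adjoint_sum_smul, Finset.sum_mul, Finset.mul_sum, smul_mul_smul_comm,
      hu.adjoint_mul, smul_ite, smul_zero, Finset.sum_ite_eq, Finset.mem_univ, if_true]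
    simp only [← Finset.sum_smul, mul_comm (star _), hWW, ite_smul, one_smul, zero_smul]
  sum_mul_adjoint := by
    have hWW (k l : κ) : ∑ i, star (W i k) * W i l = if k = l then 1 else 0 := by
      simpa only [Matrix.mul_apply, Matrix.star_apply, Matrix.one_apply] using
        congrFun (congrFun (Matrix.mem_unitaryGroup_iff'.mp hW) k) l
    calc ∑ i, (∑ l, W i l • u l) * adjoint (∑ k, W i k • u k)
        = ∑ k, ∑ l, (∑ i, star (W i k) * W i l) • (u l * adjoint (u k)) := by
          simp only [adjoint_sum_smul, Finset.sum_mul, Finset.mul_sum, smul_mul_smul_comm,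
            Finset.sum_smul]
          rw [Finset.sum_comm]
          refine Finset.sum_congr rfl fun k _ => ?_
          rw [Finset.sum_comm]
          simp only [mul_comm]
      _ = 1 := by
          simp only [hWW, ite_smul, one_smul, zero_smul, Finset.sum_ite_eq, Finset.mem_univ,
            if_true, hu.sum_mul_adjoint]

end IsIsometricPartition

namespace HilbertBasis

variable {ι : Type*}

theorem isIsometricPartition_partitionOfEquiv (b : HilbertBasis ι 𝕜 E) (e : κ × ι ≃ ι) :
    IsIsometricPartition (b.partitionOfEquiv e) where
  adjoint_mul k l := b.continuousLinearMap_ext fun i => by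
    rw [mul_apply_eq_comp, partitionOfEquiv_apply, adjoint_partitionOfEquiv_apply]
    split_ifs <;> simp
  sum_mul_adjoint := b.continuousLinearMap_ext fun j => by
    obtain ⟨⟨l, i⟩, rfl⟩ := e.surjective j
    simp [adjoint_partitionOfEquiv_apply, apply_ite, partitionOfEquiv_apply]

end HilbertBasis

end IsometricPartition

section Construction

variable {𝕜 E : Type*} [RCLike 𝕜] [NormedAddCommGroup E] [InnerProductSpace 𝕜 E] [CompleteSpace E]

theorem exists_isIsometricPartition_apply_eq_self [TopologicalSpace.SeparableSpace E]
    (hE : ¬ FiniteDimensional 𝕜 E) {s : Set E} (hs : s.Finite) :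
    ∃ u : Fin 2 → E →L[𝕜] E, IsIsometricPartition u ∧ ∀ x ∈ s, u 0 x = x := by
  obtain ⟨w, b, D, hD, hsD⟩ := exists_hilbertBasis_finite_subset_span (𝕜 := 𝕜) hs
  have : Countable w := b.orthonormal.countable
  have : Infinite w := not_finite_iff_infinite.mp fun _ => hE b.finiteDimensional
  obtain ⟨e, he⟩ := exists_finTwo_prod_equiv_apply_zero_eq hD.infinite_compl
  refine ⟨b.partitionOfEquiv e, b.isIsometricPartition_partitionOfEquiv e, fun x hx => ?_⟩
  have hfix : Set.EqOn (b.partitionOfEquiv e 0 : E →ₗ[𝕜] E) (LinearMap.id : E →ₗ[𝕜] E)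
      (b '' D) := by
    rintro _ ⟨i, hi, rfl⟩
    simp [HilbertBasis.partitionOfEquiv_apply, he i hi]
  exact LinearMap.eqOn_span hfix (hsD hx)

theorem Matrix.reflection_sqrt_mem_unitaryGroup {a b : ℝ} (ha : 0 ≤ a) (hb : 0 ≤ b)
    (hab : a + b = 1) : !![(√a : 𝕜), √b; √b, -√a] ∈ Matrix.unitaryGroup (Fin 2) 𝕜 := by
  have h : (√a : 𝕜) * √a + √b * √b = 1 := by
    exact_mod_cast (by rw [Real.mul_self_sqrt ha, Real.mul_self_sqrt hb, hab] :
      √a * √a + √b * √b = 1)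
  rw [Matrix.mem_unitaryGroup_iff]
  ext i j
  fin_cases i <;> fin_cases j <;>
    simp [Matrix.mul_apply, Fin.sum_univ_two, add_comm ((√b : 𝕜) * √b), h, mul_comm]

theorem exists_isIsometricPartition_adjoint_eq_sqrt_smul [TopologicalSpace.SeparableSpace E]
    (hE : ¬ FiniteDimensional 𝕜 E) {s : Set E} (hs : s.Finite) {a b : ℝ} (ha : 0 ≤ a)
    (hb : 0 ≤ b) (hab : a + b = 1) :
    ∃ u : Fin 2 → E →L[𝕜] E, IsIsometricPartition u ∧
      ∀ x ∈ s, adjoint (u 0) x = (√a : 𝕜) • x ∧ adjoint (u 1) x = (√b : 𝕜) • x := by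
  obtain ⟨v, hv, hvs⟩ := exists_isIsometricPartition_apply_eq_self hE hs
  refine ⟨_, hv.sum_smul_of_mem_unitaryGroup (Matrix.reflection_sqrt_mem_unitaryGroup ha hb hab),
    fun x hx => ?_⟩
  have h := hv.adjoint_sum_smul_apply_of_apply_eq !![(√a : 𝕜), √b; √b, -√a] (hvs x hx)
  exact ⟨(h 0).trans (by simp), (h 1).trans (by simp)⟩

end Construction

theorem mem_closure_pi_of_forall_finite {P : Type*} {Z : P → Type*} [∀ p, TopologicalSpace (Z p)]
    {L : ∀ p, Z p → Z p → Z p} (hL : ∀ p, Continuous (uncurry (L p))) {A : Set (∀ p, Z p)}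
    (hA : ∀ I : Set P, I.Finite → ∀ x ∈ A, ∀ y ∈ A, ∃ z ∈ A, ∀ p ∈ I, z p = L p (x p) (y p))
    {x y : ∀ p, Z p} (hx : x ∈ closure A) (hy : y ∈ closure A) :
    (fun p => L p (x p) (y p)) ∈ closure A := by
  let Φ : (∀ p, Z p) × (∀ p, Z p) → ∀ p, Z p := fun q p => L p (q.1 p) (q.2 p)
  have hΦ : Continuous Φ :=
    continuous_pi fun p => (hL p).comp ((continuous_apply p).prodMap (continuous_apply p))
  rw [mem_closure_iff_nhds]
  intro V hV
  rw [nhds_pi, Filter.mem_pi] at hV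
  obtain ⟨I, hI, t, ht, hIV⟩ := hV
  obtain ⟨U, hU, U', hU', hUU'⟩ := mem_nhds_prod_iff.mp <|
    hΦ.continuousAt.preimage_mem_nhds (set_pi_mem_nhds hI fun p _ => ht p)
  obtain ⟨x', hx'U, hx'A⟩ := mem_closure_iff_nhds.mp hx U hU
  obtain ⟨y', hy'U, hy'A⟩ := mem_closure_iff_nhds.mp hy U' hU'
  obtain ⟨z, hzA, hz⟩ := hA I hI x' hx'A y' hy'A
  refine ⟨z, hIV fun p hp => ?_, hzA⟩
  rw [hz p hp]
  exact hUU' (Set.mk_mem_prod hx'U hy'U) p hp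

noncomputable def kWotMap (M H : Type*) [TopologicalSpace M] [NormedAddCommGroup H]
    [InnerProductSpace ℂ H] (T : M → H →L[ℂ] H) (p : {K : Set M // IsCompact K} × H × H) :
    (p.1 : Set M) →ᵤ ℂ :=
  UniformFun.ofFun fun t => inner ℂ (T t.1 p.2.1) p.2.2

section Joins

variable {M H : Type*} [TopologicalSpace M] [NormedAddCommGroup H] [InnerProductSpace ℂ H]

theorem mem_closure_kWot_iff {A : Set (Fcw M H)} {X : Fcw M H} :
    X ∈ @closure (Fcw M H) (TopologicalSpace.induced Subtype.val (kWot M H)) A ↔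
      kWotMap M H X.1 ∈ closure ((fun Y : Fcw M H => kWotMap M H Y.1) '' A) :=
  induced_compose (f := Subtype.val) (g := kWotMap M H) ▸ closure_induced

variable [CompleteSpace H]

noncomputable def Fcw.join {n : ℕ} {u : Fin n → H →L[ℂ] H} (hu : IsIsometricPartition u)
    (T : Fin n → Fcw M H) : Fcw M H :=
  ⟨fun t => ∑ i, u i * (T i).1 t * adjoint (u i),
    fun t => hu.norm_sum_mul_mul_adjoint_le zero_le_one fun i => (T i).2.1 t,
    fun ξ η => by
      simp only [inner_sum_mul_mul_adjoint_apply]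
      exact continuous_finsetSum _ fun i _ => (T i).2.2 _ _⟩

theorem ClosedUnderFiniteJoins.join_mem {A : Set (Fcw M H)} (hA : ClosedUnderFiniteJoins A)
    {n : ℕ} {u : Fin n → H →L[ℂ] H} (hu : IsIsometricPartition u) {T : Fin n → Fcw M H}
    (hT : ∀ i, T i ∈ A) : Fcw.join hu T ∈ A :=
  hA n u hu.adjoint_mul hu.sum_mul_adjoint T hT _ fun _ => rfl

theorem ClosedUnderFiniteJoins.exists_mem_inner_eq_add [TopologicalSpace.SeparableSpace H]
    (hH : ¬ FiniteDimensional ℂ H) {A : Set (Fcw M H)} (hA : ClosedUnderFiniteJoins A)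
    {S T : Fcw M H} (hS : S ∈ A) (hT : T ∈ A) {s : Set H} (hs : s.Finite) {α β : ℝ}
    (hα : 0 ≤ α) (hβ : 0 ≤ β) (hαβ : α + β = 1) :
    ∃ J ∈ A, ∀ t, ∀ ξ ∈ s, ∀ η ∈ s,
      inner ℂ (J.1 t ξ) η = α * inner ℂ (S.1 t ξ) η + β * inner ℂ (T.1 t ξ) η := by
  obtain ⟨u, hu, hus⟩ := exists_isIsometricPartition_adjoint_eq_sqrt_smul hH hs hα hβ hαβ
  refine ⟨Fcw.join hu ![S, T], hA.join_mem hu (Fin.forall_fin_two.mpr ⟨hS, hT⟩),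
    fun t ξ hξ η hη => ?_⟩
  have hsq (c : ℝ) (hc : 0 ≤ c) (X : H →L[ℂ] H) :
      inner ℂ (X ((√c : ℂ) • ξ)) ((√c : ℂ) • η) = c * inner ℂ (X ξ) η := by
    rw [map_smul, inner_smul_left, inner_smul_right, Complex.conj_ofReal, ← mul_assoc,
      ← Complex.ofReal_mul, Real.mul_self_sqrt hc]
  change inner ℂ ((∑ i, u i * (![S, T] i).1 t * adjoint (u i)) ξ) η = _
  rw [inner_sum_mul_mul_adjoint_apply, Fin.sum_univ_two, (hus ξ hξ).1, (hus ξ hξ).2,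
    (hus η hη).1, (hus η hη).2]
  exact congrArg₂ (· + ·) (hsq α hα _) (hsq β hβ _)

end Joins

theorem stmt14_general {H : Type*} [NormedAddCommGroup H] [InnerProductSpace ℂ H] [CompleteSpace H]
    [TopologicalSpace.SeparableSpace H] (hinf : ¬ FiniteDimensional ℂ H)
    {M : Type*} [TopologicalSpace M]
    (A : Set (Fcw M H)) (hA : ClosedUnderFiniteJoins A) :
    ∀ S ∈ @closure (Fcw M H) (TopologicalSpace.induced Subtype.val (kWot M H)) A,
    ∀ T ∈ @closure (Fcw M H) (TopologicalSpace.induced Subtype.val (kWot M H)) A,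
    ∀ α β : ℝ, 0 ≤ α → 0 ≤ β → α + β = 1 →
    ∀ R : Fcw M H, (∀ t, R.1 t = (α : ℂ) • S.1 t + (β : ℂ) • T.1 t) →
      R ∈ @closure (Fcw M H) (TopologicalSpace.induced Subtype.val (kWot M H)) A := by
  intro S hS T hT α β hα hβ hαβ R hR
  rw [mem_closure_kWot_iff] at hS hT ⊢
  have hRST : kWotMap M H R.1 =
      fun p => (α : ℂ) • kWotMap M H S.1 p + (β : ℂ) • kWotMap M H T.1 p := by
    funext p
    simp only [kWotMap, ← UniformFun.ofFun_smul, ← UniformFun.ofFun_add]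
    congr 1
    funext t
    simp [hR]
  rw [hRST]
  refine mem_closure_pi_of_forall_finite (L := fun _ f g => (α : ℂ) • f + (β : ℂ) • g)
    (fun _ => by fun_prop) ?_ hS hT
  rintro I hI _ ⟨S', hS', rfl⟩ _ ⟨T', hT', rfl⟩
  obtain ⟨J, hJ, hJST⟩ := hA.exists_mem_inner_eq_add hinf hS' hT'
    ((hI.image fun p => p.2.1).union (hI.image fun p => p.2.2)) hα hβ hαβ
  refine ⟨_, ⟨J, hJ, rfl⟩, fun p hp => ?_⟩
  simp only [kWotMap, ← UniformFun.ofFun_smul, ← UniformFun.ofFun_add]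
  congr 1
  funext t
  exact hJST t.1 p.2.1 (.inl ⟨p, hp, rfl⟩) p.2.2 (.inr ⟨p, hp, rfl⟩)

/-- If `H` is separable and infinite-dimensional and `A` is closed under finite joins, then the
closure of `A` under uniform WOT-convergence on compacts is convex. -/
theorem stmt14 {H : Type*} [NormedAddCommGroup H] [InnerProductSpace ℂ H] [CompleteSpace H]
    [TopologicalSpace.SeparableSpace H] (hinf : ¬ FiniteDimensional ℂ H)
    {M : Type*} [Monoid M] [TopologicalSpace M]
    (A : Set (Fcw M H)) (hA : ClosedUnderFiniteJoins A) :
    ∀ S ∈ @closure (Fcw M H) (TopologicalSpace.induced Subtype.val (kWot M H)) A,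
    ∀ T ∈ @closure (Fcw M H) (TopologicalSpace.induced Subtype.val (kWot M H)) A,
    ∀ α β : ℝ, 0 ≤ α → 0 ≤ β → α + β = 1 →
    ∀ R : Fcw M H, (∀ t, R.1 t = (α : ℂ) • S.1 t + (β : ℂ) • T.1 t) →
      R ∈ @closure (Fcw M H) (TopologicalSpace.induced Subtype.val (kWot M H)) A :=
  stmt14_general hinf A hA
end

section
/- The monoid ℝ₊^d of d-tuples of non-negative reals under coordinatewise addition is 'good': every WOT-continuous contraction-valued semigroup T : ℝ₊^d → B(H) on a separable Hilbert space is SOT-continuous. -/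
/-!
For a contraction `A`, `‖A ξ - ξ‖² ≤ 2 (‖ξ‖² - Re ⟪A ξ, ξ⟫)`, so weak continuity of a contraction
semigroup at `0` already forces strong continuity at `0`. On `ℝ₊^d`, continuity at an arbitrary
point `s` follows: writing `t = (t ⊓ s) + (t - s)` and `s = (t ⊓ s) + (s - t)` with truncated
subtraction, `‖T t ξ - T s ξ‖ ≤ ‖T (t - s) ξ - ξ‖ + ‖T (s - t) ξ - ξ‖`, and both `t - s` and
`s - t` tend to `0` as `t → s`.
-/

open Filter Topology
open scoped NNReal InnerProductSpace

instance Pi.continuousSub {ι : Type*} {α : ι → Type*} [∀ i, TopologicalSpace (α i)]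
    [∀ i, Sub (α i)] [∀ i, ContinuousSub (α i)] : ContinuousSub (∀ i, α i) where
  continuous_sub := continuous_pi fun i =>
    ((continuous_apply i).comp continuous_fst).sub ((continuous_apply i).comp continuous_snd)

theorem Pi.inf_add_tsub {ι : Type*} {α : ι → Type*} [∀ i, AddCommMonoid (α i)]
    [∀ i, LinearOrder (α i)] [∀ i, CanonicallyOrderedAdd (α i)] [∀ i, Sub (α i)]
    [∀ i, OrderedSub (α i)] (t s : ∀ i, α i) : t ⊓ s + (t - s) = t :=
  funext fun _ => (add_comm _ _).trans tsub_add_min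

section InnerProductSpace

variable {𝕜 E : Type*} [RCLike 𝕜] [SeminormedAddCommGroup E] [InnerProductSpace 𝕜 E]

theorem norm_sub_sq_le_of_norm_le {x y : E} (h : ‖x‖ ≤ ‖y‖) :
    ‖x - y‖ ^ 2 ≤ 2 * (‖y‖ ^ 2 - RCLike.re ⟪x, y⟫_𝕜) := by
  rw [norm_sub_sq (𝕜 := 𝕜)]
  nlinarith [pow_le_pow_left₀ (norm_nonneg x) h 2]

theorem tendsto_of_norm_le_of_tendsto_re_inner {α : Type*} {l : Filter α} {f : α → E} {y : E}
    (hf : ∀ a, ‖f a‖ ≤ ‖y‖) (h : Tendsto (fun a => RCLike.re ⟪f a, y⟫_𝕜) l (𝓝 (‖y‖ ^ 2))) :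
    Tendsto f l (𝓝 y) := by
  have hbound : Tendsto (fun a => 2 * (‖y‖ ^ 2 - RCLike.re ⟪f a, y⟫_𝕜)) l (𝓝 0) := by
    have := (tendsto_const_nhds (x := ‖y‖ ^ 2)).sub h |>.const_mul 2
    rwa [sub_self, mul_zero] at this
  have hsq : Tendsto (fun a => ‖f a - y‖ ^ 2) l (𝓝 0) :=
    squeeze_zero (fun _ => sq_nonneg _) (fun a => norm_sub_sq_le_of_norm_le (hf a)) hbound
  rw [tendsto_iff_norm_sub_tendsto_zero]
  simpa [Real.sqrt_sq (norm_nonneg _)] using hsq.sqrt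

theorem ContinuousLinearMap.tendsto_apply_nhds_zero_of_continuousAt_inner {M : Type*} [Zero M]
    [TopologicalSpace M] {T : M → E →L[𝕜] E} (hT0 : T 0 = 1) (hc : ∀ t, ‖T t‖ ≤ 1) {ξ : E}
    (hξ : ContinuousAt (fun t => ⟪T t ξ, ξ⟫_𝕜) 0) : Tendsto (fun t => T t ξ) (𝓝 0) (𝓝 ξ) := by
  refine tendsto_of_norm_le_of_tendsto_re_inner (𝕜 := 𝕜)
    (fun t => by simpa using (T t).le_of_opNorm_le (hc t) ξ) ?_
  simpa [Function.comp_def, hT0, inner_self_eq_norm_sq] using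
    (RCLike.continuous_re.tendsto _).comp hξ

end InnerProductSpace

section Semigroup

variable {ι 𝕜 E : Type*} [NontriviallyNormedField 𝕜] [SeminormedAddCommGroup E]
  [NormedSpace 𝕜 E] {T : (ι → ℝ≥0) → E →L[𝕜] E}

theorem ContinuousLinearMap.norm_apply_sub_apply_le (hTm : ∀ s t, T (s + t) = T s * T t)
    (hc : ∀ t, ‖T t‖ ≤ 1) (t s : ι → ℝ≥0) (x : E) :
    ‖T t x - T s x‖ ≤ ‖T (t - s) x - x‖ + ‖T (s - t) x - x‖ := by
  have ht : T t = T (t ⊓ s) * T (t - s) := by rw [← hTm, Pi.inf_add_tsub]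
  have hs : T s = T (t ⊓ s) * T (s - t) := by rw [← hTm, inf_comm, Pi.inf_add_tsub]
  calc ‖T t x - T s x‖
      = ‖T (t ⊓ s) (T (t - s) x - T (s - t) x)‖ := by
        rw [ht, hs, mul_apply_eq_comp, mul_apply_eq_comp, map_sub]
    _ ≤ ‖T (t - s) x - T (s - t) x‖ :=
        ((T _).le_of_opNorm_le (hc _) _).trans_eq (one_mul _)
    _ ≤ ‖T (t - s) x - x‖ + ‖T (s - t) x - x‖ := by
        simpa only [dist_eq_norm] using dist_triangle_right _ _ x

theorem ContinuousLinearMap.continuous_apply_of_tendsto_nhds_zero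
    (hTm : ∀ s t, T (s + t) = T s * T t) (hc : ∀ t, ‖T t‖ ≤ 1) {x : E}
    (hx : Tendsto (fun t => T t x) (𝓝 0) (𝓝 x)) : Continuous fun t => T t x := by
  have hx' := tendsto_iff_norm_sub_tendsto_zero.1 hx
  refine continuous_iff_continuousAt.2 fun s => tendsto_iff_norm_sub_tendsto_zero.2 ?_
  have hsub : Tendsto (fun t => t - s) (𝓝 s) (𝓝 0) :=
    (continuous_id.sub continuous_const).tendsto' s 0 (tsub_self s)
  have hsub' : Tendsto (fun t => s - t) (𝓝 s) (𝓝 0) :=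
    (continuous_const.sub continuous_id).tendsto' s 0 (tsub_self s)
  refine squeeze_zero (fun _ => norm_nonneg _)
    (fun t => norm_apply_sub_apply_le hTm hc t s x) ?_
  simpa using (hx'.comp hsub).add (hx'.comp hsub')

end Semigroup

theorem stmt18_general {H : Type*} [NormedAddCommGroup H] [InnerProductSpace ℂ H]
    (d : ℕ) (T : (Fin d → NNReal) → H →L[ℂ] H)
    (hT0 : T 0 = 1) (hTm : ∀ s t, T (s + t) = T s * T t)
    (hc : ∀ t, ‖T t‖ ≤ 1)
    (hwot : ∀ ξ η : H, Continuous fun t => (inner ℂ (T t ξ) η : ℂ)) :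
    ∀ ξ : H, Continuous fun t => T t ξ := fun ξ =>
  ContinuousLinearMap.continuous_apply_of_tendsto_nhds_zero hTm hc
    (ContinuousLinearMap.tendsto_apply_nhds_zero_of_continuousAt_inner hT0 hc
      (hwot ξ ξ).continuousAt)

theorem stmt18 {H : Type*} [NormedAddCommGroup H] [InnerProductSpace ℂ H] [CompleteSpace H]
    [TopologicalSpace.SeparableSpace H]
    (d : ℕ) (T : (Fin d → NNReal) → H →L[ℂ] H)
    (hT0 : T 0 = 1) (hTm : ∀ s t, T (s + t) = T s * T t)
    (hc : ∀ t, ‖T t‖ ≤ 1)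
    (hwot : ∀ ξ η : H, Continuous fun t => (inner ℂ (T t ξ) η : ℂ)) :
    ∀ ξ : H, Continuous fun t => T t ξ :=
  stmt18_general d T hT0 hTm hc hwot
end
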